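/- arXiv:2401.15416 — 6 statements merged into one kernel-verified Lean document; each statement's English description precedes it below -/
import Mathlib

section
/- For every integer p, the integral ∫₀^π sin(p·t)·cot(t/2) dt equals π·sgn(p), where sgn(p) is 1 if p > 0, 0 if p = 0, and −1 if p < 0. -/
/-!
Writing `sin (n t)` as the telescoping sum of
`sin ((k + 1) t) - sin (k t) = 2 cos ((k + 1/2) t) sin (t / 2)` cancels the pole of `cot (t / 2)`:
on `(0, π]` the integrand equals `∑_{k < n} (cos ((k + 1) t) + cos (k t))`, whose integral over
`[0, π]` is `π` for `n ≥ 1`, only the constant term `cos 0` contributing. Negative `p` follow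
since the integrand is odd in `p`.
-/

open Real

theorem sin_add_sub_sin_sub_mul_cos (a x : ℝ) :
    (sin (a + x) - sin (a - x)) * cos x = (cos (a + x) + cos (a - x)) * sin x := by
  simp only [sin_add, sin_sub, cos_add, cos_sub]
  ring

theorem sin_nat_mul_mul_cos_half (n : ℕ) (t : ℝ) :
    sin (n * t) * cos (t / 2) =
      (∑ k ∈ Finset.range n, (cos ((k + 1) * t) + cos (k * t))) * sin (t / 2) := by
  have telescope : sin (n * t) = ∑ k ∈ Finset.range n, (sin ((k + 1) * t) - sin (k * t)) := by
    simpa using (Finset.sum_range_sub (fun k : ℕ => sin (k * t)) n).symm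
  rw [telescope, Finset.sum_mul, Finset.sum_mul]
  refine Finset.sum_congr rfl fun k _ => ?_
  convert sin_add_sub_sin_sub_mul_cos ((k + 1 / 2) * t) (t / 2) using 4 <;> ring

theorem integral_cos_nat_mul (k : ℕ) :
    ∫ t in (0 : ℝ)..π, cos (k * t) = if k = 0 then π else 0 := by
  split_ifs with hk
  · simp [hk]
  · rw [intervalIntegral.integral_comp_mul_left cos (Nat.cast_ne_zero.mpr hk), integral_cos]
    simp [sin_nat_mul_pi]

theorem sin_nat_mul_mul_cot_half {t : ℝ} (ht : sin (t / 2) ≠ 0) (n : ℕ) :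
    sin (n * t) * (cos (t / 2) / sin (t / 2)) =
      ∑ k ∈ Finset.range n, (cos ((k + 1) * t) + cos (k * t)) := by
  rw [mul_div_assoc', sin_nat_mul_mul_cos_half, mul_div_cancel_right₀ _ ht]

theorem integral_sum_range_cos_succ_mul_add_cos_mul (n : ℕ) :
    ∫ t in (0 : ℝ)..π, ∑ k ∈ Finset.range n, (cos ((k + 1) * t) + cos (k * t)) =
      π * ((n : ℤ).sign : ℝ) := by
  have hterm (k : ℕ) : ∫ t in (0 : ℝ)..π, (cos ((k + 1) * t) + cos (k * t)) =
      if k = 0 then π else 0 := by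
    rw [intervalIntegral.integral_add
      ((by fun_prop : Continuous fun t : ℝ => cos ((k + 1) * t)).intervalIntegrable 0 π)
      ((by fun_prop : Continuous fun t : ℝ => cos (k * t)).intervalIntegrable 0 π),
      ← Nat.cast_succ, integral_cos_nat_mul, integral_cos_nat_mul]
    simp
  rw [intervalIntegral.integral_finsetSum fun k _ =>
    (by fun_prop : Continuous _).intervalIntegrable _ _]
  simp only [hterm, Finset.sum_ite_eq', Finset.mem_range]
  rcases n with _ | n <;> simp

theorem integral_sin_nat_mul_mul_cot_half (n : ℕ) :
    ∫ t in (0 : ℝ)..π, sin (n * t) * (cos (t / 2) / sin (t / 2)) =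
      π * ((n : ℤ).sign : ℝ) := by
  rw [← integral_sum_range_cos_succ_mul_add_cos_mul n]
  refine intervalIntegral.integral_congr_ae (Filter.Eventually.of_forall fun t ht => ?_)
  rw [Set.uIoc_of_le pi_pos.le] at ht
  exact sin_nat_mul_mul_cot_half
    (sin_pos_of_pos_of_lt_pi (by linarith [ht.1]) (by linarith [ht.2, pi_pos])).ne' n

/-- For every integer `p`, `∫ t in 0..π, sin (p t) * cot (t/2) dt = π * sgn p`. -/
theorem integral_sin_int_mul_cot_half (p : ℤ) :
    ∫ t in (0 : ℝ)..Real.pi,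
      Real.sin (p * t) * (Real.cos (t / 2) / Real.sin (t / 2))
    = Real.pi * (Int.sign p : ℝ) := by
  obtain ⟨n, rfl | rfl⟩ := Int.eq_nat_or_neg p
  · exact_mod_cast integral_sin_nat_mul_mul_cot_half n
  · simp only [Int.cast_neg, Int.cast_natCast, neg_mul, sin_neg, intervalIntegral.integral_neg,
      Int.sign_neg, integral_sin_nat_mul_mul_cot_half]
    ring
end

section
/- Let 𝓗 be a nonzero finite-dimensional complex inner product space and A : 𝓗 → 𝓗 a self-adjoint linear operator with exp(2πi·A) = id (so every eigenvalue of A is an integer). Then for every integer m, the Bochner integral (1/2π) ∫_{−π}^{π} e^{−i m t} · exp(i t A) dt equals the orthogonal projection of 𝓗 onto the eigenspace ker(A − m·id) (the zero operator if m is not an eigenvalue). -/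
/-!
Diagonalize `A` in an orthonormal eigenbasis. On an eigenvector `v` with eigenvalue `μ`,
`exp(itA) v = e^{itμ} v`, so `exp(2πiA) = 1` forces `μ ∈ ℤ`, and the operator in
question maps `v` to `(1/2π) ∫_{-π}^{π} e^{i(μ-m)t} dt • v`, which is `v` if `μ = m`
and `0` otherwise. The projection onto `ker (A - m)` does the same, since eigenspaces
of a self-adjoint operator for distinct eigenvalues are orthogonal.
-/

open MeasureTheory intervalIntegral

/-- The orthogonal projection of `H` onto the eigenspace `ker (A - μ·id)` of `A`,
viewed as an operator `H →L[ℂ] H` (the zero operator if `μ` is not an eigenvalue). -/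
noncomputable def eigenProjCLM {H : Type*} [NormedAddCommGroup H]
    [InnerProductSpace ℂ H] [FiniteDimensional ℂ H]
    (A : H →L[ℂ] H) (μ : ℂ) : H →L[ℂ] H :=
  (Module.End.eigenspace (A : H →ₗ[ℂ] H) μ).subtypeL.comp
    (Submodule.orthogonalProjectionOnto (Module.End.eigenspace (A : H →ₗ[ℂ] H) μ))

open NormedSpace

theorem ContinuousLinearMap.exp_apply_of_apply_eq_smul {𝕂 E : Type*} [RCLike 𝕂]
    [NormedAddCommGroup E] [NormedSpace 𝕂 E] [CompleteSpace E]
    {A : E →L[𝕂] E} {μ : 𝕂} {v : E}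
    (hv : A v = μ • v) :
    exp A v = exp μ • v := by
  have hpow (n : ℕ) : (A ^ n) v = μ ^ n • v := by
    induction n with
    | zero => simp
    | succ n ih => rw [pow_succ', mul_apply_eq_comp, ih, map_smul, hv, smul_smul, ← pow_succ]
  have hA := (exp_series_hasSum_exp' (𝕂 := 𝕂) A).mapL (apply 𝕂 E v)
  have hμ := (exp_series_hasSum_exp' (𝕂 := 𝕂) μ).smul_const v
  refine hA.unique ?_
  convert hμ using 2 with n
  simp [hpow, smul_smul]

section
variable {E : Type*} [NormedAddCommGroup E] [NormedSpace ℂ E] [CompleteSpace E]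
  {A : E →L[ℂ] E} {μ : ℂ} {v : E}

theorem exists_int_eq_of_exp_two_pi_I_smul_eq_one
    (hper : exp (((2 * Real.pi : ℝ) * Complex.I) • A) = 1) (hv : A v = μ • v)
    (hv0 : v ≠ 0) :
    ∃ k : ℤ, μ = k := by
  have hcv : (((2 * Real.pi : ℝ) * Complex.I) • A) v =
      ((2 * Real.pi : ℝ) * Complex.I * μ) • v := by
    rw [smul_apply, hv, smul_smul]
  have hexp : Complex.exp ((2 * Real.pi : ℝ) * Complex.I * μ) = 1 := by
    have h := congr($hper v)
    rw [ContinuousLinearMap.exp_apply_of_apply_eq_smul hcv, ← Complex.exp_eq_exp_ℂ,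
      one_apply_eq_self] at h
    exact smul_left_injective ℂ hv0 (h.trans (one_smul ℂ v).symm)
  obtain ⟨k, hk⟩ := Complex.exp_eq_one_iff.mp hexp
  refine ⟨k, mul_left_cancel₀ (?_ : (2 * Real.pi * Complex.I : ℂ) ≠ 0) ?_⟩
  · simp [Real.pi_ne_zero]
  · push_cast at hk; linear_combination hk

theorem intervalIntegral_exp_smul_exp_apply_of_apply_eq_smul (hv : A v = μ • v) (m : ℂ)
    (a b : ℝ) :
    (∫ t in a..b, Complex.exp (-Complex.I * m * t) • exp (((t : ℂ) * Complex.I) • A)) v =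
      (∫ t in a..b, Complex.exp ((μ - m) * Complex.I * t)) • v := by
  have hcont : Continuous fun t : ℝ =>
      Complex.exp (-Complex.I * m * t) • exp (((t : ℂ) * Complex.I) • A) := by
    -- `exp_continuous` is stated for Banach algebras over `ℚ`.
    let := NormedAlgebra.restrictScalars ℚ ℂ (E →L[ℂ] E)
    fun_prop
  rw [ContinuousLinearMap.intervalIntegral_apply (hcont.intervalIntegrable a b),
    ← intervalIntegral.integral_smul_const]
  congr 1 with t
  have hcv : (((t : ℂ) * Complex.I) • A) v = ((t : ℂ) * Complex.I * μ) • v := by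
    rw [smul_apply, hv, smul_smul]
  rw [smul_apply, ContinuousLinearMap.exp_apply_of_apply_eq_smul hcv,
    ← Complex.exp_eq_exp_ℂ, smul_smul, ← Complex.exp_add]
  ring_nf

end

theorem integral_exp_int_mul_I (n : ℤ) :
    ∫ t in (-Real.pi : ℝ)..Real.pi, Complex.exp (n * Complex.I * t) =
      if n = 0 then (2 * Real.pi : ℂ) else 0 := by
  split_ifs with hn
  · simp [hn]; ring
  · have hc : (n : ℂ) * Complex.I ≠ 0 := by simp [hn]
    have hperiod : Complex.exp (n * Complex.I * Real.pi) =
        Complex.exp (n * Complex.I * (-Real.pi : ℝ)) :=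
      Complex.exp_eq_exp_iff_exists_int.mpr ⟨n, by push_cast; ring⟩
    rw [integral_exp_mul_complex hc, hperiod, sub_self, zero_div]

theorem eigenProjCLM_apply_of_apply_eq_smul {H : Type*} [NormedAddCommGroup H]
    [InnerProductSpace ℂ H] [FiniteDimensional ℂ H] {A : H →L[ℂ] H} (hA : IsSelfAdjoint A)
    {μ : ℂ} {v : H} (hv : A v = μ • v) (ν : ℂ) [Decidable (μ = ν)] :
    eigenProjCLM A ν v = if μ = ν then v else 0 := by
  have hvμ : v ∈ Module.End.eigenspace (A : H →ₗ[ℂ] H) μ :=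
    Module.End.mem_eigenspace_iff.mpr hv
  split_ifs with hμν
  · subst hμν
    exact Submodule.starProjection_eq_self_iff.mpr hvμ
  · have hv_perp : v ∈ (Module.End.eigenspace (A : H →ₗ[ℂ] H) ν)ᗮ :=
      (Submodule.mem_orthogonal _ _).mpr fun w hw =>
        hA.isSymmetric.orthogonalFamily_eigenspaces (Ne.symm hμν) ⟨w, hw⟩ ⟨v, hvμ⟩
    simp [eigenProjCLM, Submodule.orthogonalProjectionOnto_apply_of_mem_orthogonal hv_perp]

theorem fourier_coeff_unitary_group_eq_eigenprojection_general
    {H : Type*} [NormedAddCommGroup H] [InnerProductSpace ℂ H]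
    [FiniteDimensional ℂ H]
    (A : H →L[ℂ] H) (hA : IsSelfAdjoint A)
    (hper : NormedSpace.exp (((2 * Real.pi : ℝ) * Complex.I) • A) = 1)
    (m : ℤ) :
    (1 / (2 * Real.pi)) •
      ∫ t in (-Real.pi : ℝ)..Real.pi,
        Complex.exp (-Complex.I * m * t) •
          NormedSpace.exp (((t : ℂ) * Complex.I) • A)
    = eigenProjCLM A (m : ℂ) := by
  classical
  let b := hA.isSymmetric.eigenvectorBasis rfl
  refine ContinuousLinearMap.coe_injective (b.toBasis.ext fun i => ?_)
  have hv : A (b i) = (hA.isSymmetric.eigenvalues rfl i : ℂ) • b i :=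
    hA.isSymmetric.apply_eigenvectorBasis rfl i
  obtain ⟨k, hk⟩ := exists_int_eq_of_exp_two_pi_I_smul_eq_one hper hv (b.toBasis.ne_zero i)
  rw [hk] at hv
  have hkm : (k : ℂ) - m = ((k - m : ℤ) : ℂ) := by push_cast; rfl
  simp only [ContinuousLinearMap.coe_coe, OrthonormalBasis.coe_toBasis, smul_apply,
    intervalIntegral_exp_smul_exp_apply_of_apply_eq_smul hv, hkm, integral_exp_int_mul_I,
    eigenProjCLM_apply_of_apply_eq_smul hA hv, sub_eq_zero, Int.cast_inj]
  split_ifs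
  · have hnorm : ((1 / (2 * Real.pi) : ℝ) : ℂ) * (2 * Real.pi) = 1 := by
      push_cast; field_simp
    rw [← smul_assoc, Complex.real_smul, hnorm, one_smul]
  · simp

/-- For a self-adjoint operator `A` with `exp(2πi·A) = id` (so all eigenvalues are
integers) on a nonzero finite-dimensional complex inner product space, and every
integer `m`, the Bochner integral `(1/2π) ∫_{-π}^{π} e^{-imt}·exp(itA) dt` equals the
orthogonal projection onto the eigenspace `ker (A - m·id)`. -/
theorem fourier_coeff_unitary_group_eq_eigenprojection
    {H : Type*} [NormedAddCommGroup H] [InnerProductSpace ℂ H]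
    [FiniteDimensional ℂ H] [Nontrivial H]
    (A : H →L[ℂ] H) (hA : IsSelfAdjoint A)
    (hper : NormedSpace.exp (((2 * Real.pi : ℝ) * Complex.I) • A) = 1)
    (m : ℤ) :
    (1 / (2 * Real.pi)) •
      ∫ t in (-Real.pi : ℝ)..Real.pi,
        Complex.exp (-Complex.I * m * t) •
          NormedSpace.exp (((t : ℂ) * Complex.I) • A)
    = eigenProjCLM A (m : ℂ) :=
  fourier_coeff_unitary_group_eq_eigenprojection_general A hA hper m
end

section
/- Let E ∈ (0,1) and let l : ℕ → ℕ be a sequence with l(k) ≤ k for all k and such that there exists C > 0 with |l(k) − k·E| ≤ C for all k. Then C(k, l(k)) · E^{l(k)} · (1−E)^{k−l(k)} · √(2π·k·E·(1−E)) = 1 + O(1/k); that is, there exist C' > 0 and k₀ such that for all k ≥ k₀, |C(k, l(k))·E^{l(k)}·(1−E)^{k−l(k)}·√(2π k E(1−E)) − 1| ≤ C'/k. -/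
/-!
Write `r n = log (stirlingSeq n) - log √π` for the error in Stirling's formula, so that
`log n! = n log n - n + log (2πn) / 2 + r n` with `0 ≤ r n ≤ 1 / (12 n)` (Robbins). For `k = n + m`,
`x = k p` and `y = k q`, the logarithm of `C(k, n) pⁿ qᵐ √(2πkpq)` is then exactly
`r k - r n - r m - (n + 1/2) log (n / x) - (m + 1/2) log (m / y)`. The elementary bounds
`1 - t⁻¹ ≤ log t ≤ t - 1` give `(n + 1/2) log (n / x) = (n - x) + O(((n - x)² + |n - x|) / x)`,
and the linear terms cancel because `(n - x) + (m - y) = 0`. So the logarithm is `O(1 / k)` when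
`|n - k p|` stays bounded, and hence so is the quantity minus one, as `|eᵍ - 1| ≤ 2 |g|`.
-/

open Real Filter Topology Stirling

noncomputable def logStirlingRemainder (n : ℕ) : ℝ :=
  log (stirlingSeq n) - log √π

namespace logStirlingRemainder

theorem nonneg {n : ℕ} (hn : n ≠ 0) : 0 ≤ logStirlingRemainder n :=
  sub_nonneg.2 <| log_le_log (by positivity) (sqrt_pi_le_stirlingSeq hn)

theorem le_one_div (n : ℕ) : logStirlingRemainder n ≤ 1 / (12 * n) := by
  rcases n with _ | n
  · simp [logStirlingRemainder, log_nonneg (one_le_sqrt.2 (by linarith [pi_gt_three]))]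
  -- Robbins' stepwise bound makes `log (stirlingSeq j) - 1 / (12 j)` increase towards `log √π`.
  have hmono : Monotone fun j : ℕ => log (stirlingSeq (j + 1)) - 1 / (12 * (j + 1 : ℕ)) := by
    refine monotone_nat_of_le_succ fun j => ?_
    have := log_stirlingSeq_sdiff_le (j + 1)
    have hdiff : (1 : ℝ) / (12 * (j + 1 : ℕ)) - 1 / (12 * (j + 1 + 1 : ℕ))
        = 1 / (12 * (j + 1 : ℕ) * ((j + 1 : ℕ) + 1)) := by push_cast; field_simp; ring
    linarith
  have hlim : Tendsto (fun j : ℕ => log (stirlingSeq (j + 1)) - 1 / (12 * (j + 1 : ℕ)))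
      atTop (𝓝 (log √π - 0)) := by
    refine (((continuousAt_log (sqrt_pos.2 pi_pos).ne').tendsto.comp
      (tendsto_stirlingSeq_sqrt_pi.comp (tendsto_add_atTop_nat 1))).sub ?_)
    have := (tendsto_const_div_atTop_nhds_zero_nat (1 / 12 : ℝ)).comp (tendsto_add_atTop_nat 1)
    refine this.congr fun j => ?_
    simp only [Function.comp_apply]
    ring
  have := hmono.ge_of_tendsto hlim n
  simp only [logStirlingRemainder]
  linarith

theorem abs_add_sub_sub_le {n m : ℕ} (hn : n ≠ 0) (hm : m ≠ 0) :
    |logStirlingRemainder (n + m) - logStirlingRemainder n - logStirlingRemainder m|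
      ≤ 1 / (12 * n) + 1 / (12 * m) := by
  have hnm : 1 / (12 * ((n + m : ℕ) : ℝ)) ≤ 1 / (12 * n) := by
    gcongr
    exact_mod_cast n.le_add_right m
  rw [abs_le]
  constructor <;> linarith [le_one_div (n + m), le_one_div n, le_one_div m, nonneg hn, nonneg hm,
    nonneg (n := n + m) (by omega)]

end logStirlingRemainder

theorem log_factorial_eq_stirling {n : ℕ} (hn : n ≠ 0) :
    log n.factorial = n * log n - n + log (2 * π * n) / 2 + logStirlingRemainder n := by
  have hn' : (n : ℝ) ≠ 0 := by exact_mod_cast hn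
  rw [logStirlingRemainder, log_stirlingSeq_formula, log_div hn' (exp_ne_zero 1), log_exp,
    log_sqrt pi_pos.le, log_mul (by positivity) hn', log_mul (by positivity) hn',
    log_mul two_ne_zero pi_ne_zero]
  ring

theorem log_choose_add (n m : ℕ) :
    log ((n + m).choose n) = log (n + m).factorial - log n.factorial - log m.factorial := by
  rw [Nat.cast_choose ℝ (n.le_add_right m), Nat.add_sub_cancel_left,
    log_div (by positivity) (by positivity), log_mul (by positivity) (by positivity)]
  ring

theorem log_choose_mul_pow_mul_pow_mul_sqrt {n m : ℕ} (hn : n ≠ 0) (hm : m ≠ 0)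
    {p q : ℝ} (hp : 0 < p) (hq : 0 < q) :
    log ((n + m).choose n * p ^ n * q ^ m * √(2 * π * (n + m : ℕ) * p * q)) =
      logStirlingRemainder (n + m) - logStirlingRemainder n - logStirlingRemainder m
        - (n + 1 / 2) * log (n / ((n + m : ℕ) * p))
        - (m + 1 / 2) * log (m / ((n + m : ℕ) * q)) := by
  have hn' : (n : ℝ) ≠ 0 := by exact_mod_cast hn
  have hm' : (m : ℝ) ≠ 0 := by exact_mod_cast hm
  have hk : ((n + m : ℕ) : ℝ) ≠ 0 := by positivity
  have h2π : 2 * π ≠ 0 := by positivity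
  have hchoose : ((n + m).choose n : ℝ) ≠ 0 := by
    exact_mod_cast (Nat.choose_pos (n.le_add_right m)).ne'
  rw [log_mul (by positivity) (by positivity), log_mul (by positivity) (by positivity),
    log_mul hchoose (by positivity), log_pow, log_pow, log_sqrt (by positivity),
    log_choose_add, log_factorial_eq_stirling hn, log_factorial_eq_stirling hm,
    log_factorial_eq_stirling (by omega),
    log_div hn' (by positivity), log_div hm' (by positivity),
    log_mul hk hp.ne', log_mul hk hq.ne', log_mul (by positivity) hq.ne',
    log_mul (by positivity) hp.ne', log_mul h2π hk, log_mul h2π hn', log_mul h2π hm']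
  push_cast
  ring

theorem abs_add_half_mul_log_div_sub_le {n x : ℝ} (hx : 0 < x) (hn : x / 2 ≤ n) :
    |(n + 1 / 2) * log (n / x) - (n - x)| ≤ ((n - x) ^ 2 + |n - x|) / x := by
  have hn0 : 0 < n := by linarith
  have hlower : (n - x) / n ≤ log (n / x) := by
    have := one_sub_inv_le_log_of_pos (div_pos hn0 hx)
    rwa [inv_div, one_sub_div hn0.ne'] at this
  have hupper : log (n / x) ≤ (n - x) / x := by
    have := log_le_sub_one_of_pos (div_pos hn0 hx)
    rwa [div_sub_one hx.ne'] at this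
  have hhalf : |n - x| / (2 * n) ≤ |n - x| / x := by
    gcongr; linarith
  rw [abs_le]
  constructor
  · calc -(((n - x) ^ 2 + |n - x|) / x) ≤ -(|n - x| / (2 * n)) := by
          rw [add_div]; linarith [div_nonneg (sq_nonneg (n - x)) hx.le]
      _ ≤ (n - x) / (2 * n) := by
          rw [neg_le, ← neg_div]; gcongr; exact neg_le_abs _
      _ = (n + 1 / 2) * ((n - x) / n) - (n - x) := by field_simp; ring
      _ ≤ (n + 1 / 2) * log (n / x) - (n - x) := by gcongr
  · calc (n + 1 / 2) * log (n / x) - (n - x) ≤ (n + 1 / 2) * ((n - x) / x) - (n - x) := by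
          gcongr
      _ = ((n - x) ^ 2 + (n - x) / 2) / x := by field_simp; ring
      _ ≤ ((n - x) ^ 2 + |n - x|) / x := by
          gcongr; linarith [le_abs_self (n - x), abs_nonneg (n - x)]

theorem abs_log_choose_mul_pow_mul_sqrt_le {p C : ℝ} (hp0 : 0 < p) (hp1 : p < 1) {k n : ℕ}
    (hnk : n ≤ k) (hC : |n - k * p| ≤ C) (hkp : 2 * C < k * p) (hkq : 2 * C < k * (1 - p)) :
    |log (k.choose n * p ^ n * (1 - p) ^ (k - n) * √(2 * π * k * p * (1 - p)))|
      ≤ (C ^ 2 + C + 1) * (p⁻¹ + (1 - p)⁻¹) / k := by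
  obtain ⟨m, rfl⟩ := Nat.exists_eq_add_of_le hnk
  rw [Nat.add_sub_cancel_left]
  set q := 1 - p
  set x := ((n + m : ℕ) : ℝ) * p
  set y := ((n + m : ℕ) : ℝ) * q
  have hq : 0 < q := by linarith
  have hC0 : 0 ≤ C := (abs_nonneg _).trans hC
  have hmC : m - y = -(n - x) := by simp only [x, y, q]; push_cast; ring
  have hx : 0 < x := by linarith
  have hy : 0 < y := by linarith
  obtain ⟨hCl, hCu⟩ := abs_le.1 hC
  have hnx : x / 2 ≤ n := by linarith
  have hmy : y / 2 ≤ m := by linarith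
  have hn0 : n ≠ 0 := by rintro rfl; simp at hnx; linarith
  have hm0 : m ≠ 0 := by rintro rfl; simp at hmy; linarith
  have hδ : (n - x) ^ 2 + |n - x| ≤ C ^ 2 + C :=
    add_le_add (sq_le_sq' hCl hCu) hC
  have hδ' : (m - y) ^ 2 + |m - y| ≤ C ^ 2 + C := by rwa [hmC, neg_sq, abs_neg]
  have hn12 : 1 / (12 * (n : ℝ)) ≤ 1 / x := by gcongr; linarith
  have hm12 : 1 / (12 * (m : ℝ)) ≤ 1 / y := by gcongr; linarith
  have hR := logStirlingRemainder.abs_add_sub_sub_le hn0 hm0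
  have hA := abs_add_half_mul_log_div_sub_le hx hnx
  have hB := abs_add_half_mul_log_div_sub_le hy hmy
  rw [log_choose_mul_pow_mul_pow_mul_sqrt hn0 hm0 hp0 hq]
  calc _ ≤ (1 / (12 * n) + 1 / (12 * m)) + ((n - x) ^ 2 + |n - x|) / x
          + ((m - y) ^ 2 + |m - y|) / y := by
        rw [abs_le] at hR hA hB ⊢
        constructor <;> linarith
    _ ≤ (1 / x + 1 / y) + (C ^ 2 + C) / x + (C ^ 2 + C) / y := by gcongr
    _ = (C ^ 2 + C + 1) * (p⁻¹ + q⁻¹) / (n + m : ℕ) := by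
        simp only [x, y]; field_simp; ring

/-- de Moivre–Laplace / Stirling estimate: if `E ∈ (0,1)` and `l(k)` stays within a
bounded distance of `k·E`, then
`C(k, l(k))·E^{l(k)}·(1−E)^{k−l(k)}·√(2πkE(1−E)) = 1 + O(1/k)`. -/
theorem binomial_pmf_near_mean (E : ℝ) (hE : E ∈ Set.Ioo (0 : ℝ) 1)
    (l : ℕ → ℕ) (hl : ∀ k, l k ≤ k)
    (hbd : ∃ C > 0, ∀ k : ℕ, |(l k : ℝ) - k * E| ≤ C) :
    ∃ C' > 0, ∃ k₀ : ℕ, ∀ k ≥ k₀,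
      |(Nat.choose k (l k) : ℝ) * E ^ (l k) * (1 - E) ^ (k - l k) *
          Real.sqrt (2 * Real.pi * k * E * (1 - E)) - 1| ≤ C' / k := by
  obtain ⟨hE0, hE1⟩ := hE
  obtain ⟨C, hC0, hC⟩ := hbd
  have hF0 : 0 < 1 - E := by linarith
  set K := (C ^ 2 + C + 1) * (E⁻¹ + (1 - E)⁻¹)
  have hK : 0 < K := by positivity
  have hlarge : ∀ᶠ k : ℕ in atTop, 2 * C < k * E ∧ 2 * C < k * (1 - E) ∧ K ≤ k :=
    ((tendsto_natCast_atTop_atTop.atTop_mul_const hE0).eventually_gt_atTop _).and <|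
      ((tendsto_natCast_atTop_atTop.atTop_mul_const hF0).eventually_gt_atTop _).and <|
        tendsto_natCast_atTop_atTop.eventually_ge_atTop _
  obtain ⟨k₀, hk₀⟩ := eventually_atTop.1 hlarge
  refine ⟨2 * K, by positivity, k₀, fun k hk => ?_⟩
  obtain ⟨hkE, hkF, hKk⟩ := hk₀ k hk
  have hk0 : (0 : ℝ) < k := hK.trans_le hKk
  have hlog := abs_log_choose_mul_pow_mul_sqrt_le hE0 hE1 (hl k) (hC k) hkE hkF
  have hchoose : (0 : ℝ) < k.choose (l k) := by exact_mod_cast Nat.choose_pos (hl k)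
  set P := (k.choose (l k) : ℝ) * E ^ l k * (1 - E) ^ (k - l k) * √(2 * π * k * E * (1 - E))
  have hP : 0 < P := by positivity
  rw [← exp_log hP]
  calc _ ≤ 2 * |log P| := abs_exp_sub_one_le (hlog.trans ((div_le_one hk0).2 hKk))
    _ ≤ 2 * K / k := by rw [mul_div_assoc]; gcongr
end

section
/- Let E ∈ (0,1), let u ≥ 0 be a real number with u ≠ E/(1−E), and let l : ℕ → ℕ be a sequence with l(k) ≤ k for all k and such that there exists C > 0 with |l(k) − k·E| ≤ C for all k. Then for every natural number N, k^N · (k+1) · C(k, l(k)) · u^{l(k)} / (1+u)^k → 0 as k → ∞. -/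
/-!
Chernoff bound: reading one term of the binomial expansion of `(1 + t u)^k` gives
`C(k,l) u^l ≤ t^{-l} (1 + t u)^k` for every `t > 0`. As `l = kE + O(1)`, the quantity is then at
most a constant times `k^N (k+1) r^k` with `r = (1 + t u) / (t^E (1 + u))`. The function
`t ↦ t^E (1 + u) - (1 + t u)` vanishes at `t = 1` with derivative `E (1 + u) - u`, which is nonzero
exactly because `u ≠ E / (1 - E)`; so `1` is not a local maximum, and some `t > 0` gives `r < 1`.
-/

open Filter Real Topology

lemma choose_mul_pow_le_one_add_pow {R : Type*} [CommSemiring R] [PartialOrder R]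
    [IsOrderedRing R] {x : R} (hx : 0 ≤ x) {k l : ℕ} (h : l ≤ k) :
    (k.choose l : R) * x ^ l ≤ (1 + x) ^ k := by
  rw [add_comm, add_pow]
  calc (k.choose l : R) * x ^ l = x ^ l * 1 ^ (k - l) * k.choose l := by ring
    _ ≤ ∑ i ∈ Finset.range (k + 1), x ^ i * 1 ^ (k - i) * k.choose i :=
      Finset.single_le_sum (f := fun i => x ^ i * 1 ^ (k - i) * (k.choose i : R))
        (fun i _ => mul_nonneg (mul_nonneg (pow_nonneg hx i) (pow_nonneg zero_le_one _))
          (Nat.cast_nonneg _)) (Finset.mem_range.2 (Nat.lt_succ_of_le h))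

lemma HasDerivAt.frequently_lt_of_ne_zero {f : ℝ → ℝ} {f' a : ℝ} (hf : HasDerivAt f f' a)
    (hf' : f' ≠ 0) : ∃ᶠ x in 𝓝 a, f a < f x :=
  (not_eventually.mp fun h => hf' (IsLocalMax.hasDerivAt_eq_zero
    (h.mono fun _ hx => not_lt.mp hx) hf)).mono fun _ => not_not.mp

lemma exists_pos_one_add_mul_lt_rpow_mul {E u : ℝ} (hune : u ≠ E / (1 - E)) :
    ∃ t > 0, 1 + t * u < t ^ E * (1 + u) := by
  have hD : E * (1 + u) - u ≠ 0 := by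
    intro h
    have h1E : 1 - E ≠ 0 := fun h1E => by simp [show E = 1 by linarith] at h
    exact hune (by field_simp; linarith)
  have hderiv : HasDerivAt (fun t : ℝ => t ^ E * (1 + u) - (1 + t * u)) (E * (1 + u) - u) 1 :=
    (((hasDerivAt_rpow_const (p := E) (Or.inl one_ne_zero)).mul_const (1 + u)).sub
      (((hasDerivAt_id (1 : ℝ)).mul_const u).const_add 1)).congr_deriv (by simp)
  obtain ⟨t, hgt, ht⟩ :=
    ((hderiv.frequently_lt_of_ne_zero hD).and_eventually (Ioi_mem_nhds one_pos)).exists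
  exact ⟨t, ht, by simpa using hgt⟩

lemma rpow_le_exp_mul_abs_log {t x C : ℝ} (ht : 0 < t) (hx : |x| ≤ C) :
    t ^ x ≤ exp (C * |log t|) := by
  rw [rpow_def_of_pos ht, exp_le_exp]
  calc log t * x ≤ |log t * x| := le_abs_self _
    _ = |x| * |log t| := by rw [abs_mul, mul_comm]
    _ ≤ C * |log t| := mul_le_mul_of_nonneg_right hx (abs_nonneg _)

lemma choose_mul_pow_div_one_add_pow_le {t u : ℝ} (ht : 0 < t) (hu : 0 ≤ u) (E : ℝ)
    {k l : ℕ} (h : l ≤ k) :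
    (k.choose l : ℝ) * u ^ l / (1 + u) ^ k ≤
      t ^ ((k : ℝ) * E - l) * ((1 + t * u) / (t ^ E * (1 + u))) ^ k := by
  have htE : 0 < t ^ E := rpow_pos_of_pos ht E
  have hrhs : t ^ ((k : ℝ) * E - l) * ((1 + t * u) / (t ^ E * (1 + u))) ^ k =
      (1 + t * u) ^ k / t ^ l / (1 + u) ^ k := by
    rw [rpow_sub ht, mul_comm (k : ℝ), rpow_mul ht.le, rpow_natCast, rpow_natCast, div_pow,
      mul_pow]
    field_simp
  rw [hrhs]
  gcongr
  rw [le_div_iff₀ (by positivity), mul_assoc, ← mul_pow]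
  simpa [mul_comm u t] using choose_mul_pow_le_one_add_pow (by positivity : 0 ≤ t * u) h

lemma tendsto_pow_mul_add_one_mul_pow_atTop {r : ℝ} (hr : |r| < 1) (N : ℕ) :
    Tendsto (fun k : ℕ => (k : ℝ) ^ N * (k + 1) * r ^ k) atTop (𝓝 0) := by
  have := (tendsto_pow_const_mul_const_pow_of_abs_lt_one (N + 1) hr).add
    (tendsto_pow_const_mul_const_pow_of_abs_lt_one N hr)
  simpa [pow_succ, mul_add, add_mul] using this

theorem monomial_section_norm_rapid_decay_general (E : ℝ)
    (u : ℝ) (hu : 0 ≤ u) (hune : u ≠ E / (1 - E))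
    (l : ℕ → ℕ) (hl : ∀ k, l k ≤ k)
    (hbd : ∃ C > 0, ∀ k : ℕ, |(l k : ℝ) - k * E| ≤ C) :
    ∀ N : ℕ,
      Filter.Tendsto
        (fun k : ℕ =>
          (k : ℝ) ^ N * (k + 1) * (Nat.choose k (l k) : ℝ) * u ^ (l k) / (1 + u) ^ k)
        Filter.atTop (nhds 0) := by
  intro N
  obtain ⟨C, -, hC⟩ := hbd
  obtain ⟨t, ht, htr⟩ := exists_pos_one_add_mul_lt_rpow_mul hune
  set r := (1 + t * u) / (t ^ E * (1 + u))
  have hr : |r| < 1 := by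
    rw [abs_of_pos (by positivity), div_lt_one (by positivity)]
    exact htr
  have hbound := (tendsto_pow_mul_add_one_mul_pow_atTop hr N).const_mul (exp (C * |log t|))
  rw [mul_zero] at hbound
  refine squeeze_zero (fun k => by positivity) (fun k => ?_) hbound
  have hexp : t ^ ((k : ℝ) * E - l k) ≤ exp (C * |log t|) :=
    rpow_le_exp_mul_abs_log ht (by rw [abs_sub_comm]; exact hC k)
  calc (k : ℝ) ^ N * (k + 1) * (k.choose (l k) : ℝ) * u ^ l k / (1 + u) ^ k
      = (k : ℝ) ^ N * (k + 1) * ((k.choose (l k) : ℝ) * u ^ l k / (1 + u) ^ k) := by ring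
    _ ≤ (k : ℝ) ^ N * (k + 1) * (t ^ ((k : ℝ) * E - l k) * r ^ k) := by
      gcongr; exact choose_mul_pow_div_one_add_pow_le ht hu E (hl k)
    _ ≤ (k : ℝ) ^ N * (k + 1) * (exp (C * |log t|) * r ^ k) := by gcongr
    _ = exp (C * |log t|) * ((k : ℝ) ^ N * (k + 1) * r ^ k) := by ring

/-- If `E ∈ (0,1)`, `u ≥ 0` with `u ≠ E/(1−E)`, and `l(k)` stays within a bounded
distance of `k·E`, then `(k+1)·C(k,l(k))·u^{l(k)}/(1+u)^k` is `O(k^{−∞})`: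
for every `N`, `k^N·(k+1)·C(k,l(k))·u^{l(k)}/(1+u)^k → 0` as `k → ∞`. -/
theorem monomial_section_norm_rapid_decay (E : ℝ) (hE : E ∈ Set.Ioo (0 : ℝ) 1)
    (u : ℝ) (hu : 0 ≤ u) (hune : u ≠ E / (1 - E))
    (l : ℕ → ℕ) (hl : ∀ k, l k ≤ k)
    (hbd : ∃ C > 0, ∀ k : ℕ, |(l k : ℝ) - k * E| ≤ C) :
    ∀ N : ℕ,
      Filter.Tendsto
        (fun k : ℕ =>
          (k : ℝ) ^ N * (k + 1) * (Nat.choose k (l k) : ℝ) * u ^ (l k) / (1 + u) ^ k)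
        Filter.atTop (nhds 0) :=
  monomial_section_norm_rapid_decay_general E u hu hune l hl hbd
end

section
/- Let E ∈ (0,1) and let l : ℕ → ℕ be a sequence with l(k) ≤ k for all k and such that there exists C > 0 with |l(k) − k·E| ≤ C for all k. Set c(k) = l(k) − k·E. Then (1 − c(k)/l(k))^{l(k)} · (1 + c(k)/(k−l(k)))^{k−l(k)} = 1 + O(1/k); that is, there exist C' > 0 and k₀ such that for all k ≥ k₀, |(1 − c(k)/l(k))^{l(k)}·(1 + c(k)/(k−l(k)))^{k−l(k)} − 1| ≤ C'/k. -/
/-!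
Write the factor as `(1 - t/n)^n (1 + t/m)^m` with `n = l(k)`, `m = k - l(k)` and `t = c(k)`.
By `1 + x ≤ eˣ` it is at most `e^{-t} eᵗ = 1`. Conversely `e^{-x}(1 - x²) ≤ 1 - x` for `|x| ≤ 1`,
so Bernoulli's inequality gives `(1 - t/n)^n ≥ e^{-t}(1 - t²/n)`, and the factor is at least
`1 - t²/n - t²/m`. Since `t` is bounded while `n` and `m` grow linearly in `k`, the deviation
from `1` is `O(1/k)`.
-/

open Real Filter

lemma exp_neg_mul_one_sub_sq_le_one_sub {x : ℝ} (hx : |x| ≤ 1) :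
    exp (-x) * (1 - x ^ 2) ≤ 1 - x := by
  obtain ⟨hx₁, hx₂⟩ := abs_le.1 hx
  calc exp (-x) * (1 - x ^ 2) = (1 - x) * (exp (-x) * (1 + x)) := by ring
    _ ≤ (1 - x) * (exp (-x) * exp x) := by gcongr; linarith [add_one_le_exp x]
    _ = 1 - x := by rw [← exp_add, neg_add_cancel, exp_zero, mul_one]

lemma exp_neg_mul_one_sub_sq_div_le_one_sub_div_pow {n : ℕ} {t : ℝ} (ht : |t| ≤ n) :
    exp (-t) * (1 - t ^ 2 / n) ≤ (1 - t / n) ^ n := by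
  rcases eq_or_ne n 0 with rfl | hn
  · simp_all
  have hn₀ : (0 : ℝ) < n := by positivity
  have hx : |t / n| ≤ 1 := by rwa [abs_div, Nat.abs_cast, div_le_one hn₀]
  have bernoulli : 1 - t ^ 2 / n ≤ (1 - (t / n) ^ 2) ^ n := by
    calc 1 - t ^ 2 / n = 1 + n * -(t / n) ^ 2 := by field_simp; ring
      _ ≤ (1 + -(t / n) ^ 2) ^ n := one_add_mul_le_pow (by nlinarith [abs_le.1 hx]) n
      _ = (1 - (t / n) ^ 2) ^ n := by ring
  calc exp (-t) * (1 - t ^ 2 / n) ≤ exp (-(n * (t / n))) * (1 - (t / n) ^ 2) ^ n := by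
        rw [mul_div_cancel₀ t hn₀.ne']
        exact mul_le_mul_of_nonneg_left bernoulli (exp_pos _).le
    _ = (exp (-(t / n)) * (1 - (t / n) ^ 2)) ^ n := by
        rw [mul_pow, ← exp_nat_mul, mul_neg]
    _ ≤ (1 - t / n) ^ n := by
        have : 0 ≤ 1 - (t / n) ^ 2 := by nlinarith [abs_le.1 hx]
        gcongr
        exact exp_neg_mul_one_sub_sq_le_one_sub hx

lemma abs_one_sub_div_pow_mul_one_add_div_pow_sub_one_le {n m : ℕ} {t : ℝ}
    (hn : |t| ≤ n) (hm : |t| ≤ m) :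
    |(1 - t / n) ^ n * (1 + t / m) ^ m - 1| ≤ t ^ 2 / n + t ^ 2 / m := by
  have hm' : |-t| ≤ m := by rwa [abs_neg]
  have hflip : (1 + t / m) ^ m = (1 - -t / m) ^ m := by ring
  have hA₀ : 0 ≤ (1 - t / n) ^ n :=
    pow_nonneg (sub_nonneg.2 (div_le_one_of_le₀ (abs_le.1 hn).2 n.cast_nonneg)) n
  have hB₀ : 0 ≤ (1 - -t / m) ^ m :=
    pow_nonneg (sub_nonneg.2 (div_le_one_of_le₀ (abs_le.1 hm').2 m.cast_nonneg)) m
  have hupper : (1 - t / n) ^ n * (1 - -t / m) ^ m ≤ 1 :=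
    calc (1 - t / n) ^ n * (1 - -t / m) ^ m ≤ exp (-t) * exp (- -t) :=
          mul_le_mul (one_sub_div_pow_le_exp_neg (abs_le.1 hn).2)
            (one_sub_div_pow_le_exp_neg (abs_le.1 hm').2) hB₀ (exp_pos _).le
      _ = 1 := by rw [← exp_add, add_neg_cancel, exp_zero]
  have hlower : 1 - (t ^ 2 / n + t ^ 2 / m) ≤ (1 - t / n) ^ n * (1 - -t / m) ^ m := by
    by_cases hsmall : t ^ 2 / n + t ^ 2 / m ≤ 1
    · have hA := exp_neg_mul_one_sub_sq_div_le_one_sub_div_pow hn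
      have hB := exp_neg_mul_one_sub_sq_div_le_one_sub_div_pow hm'
      rw [neg_sq] at hB
      have hn₀ : 0 ≤ t ^ 2 / n := by positivity
      have hm₀ : 0 ≤ t ^ 2 / m := by positivity
      calc 1 - (t ^ 2 / n + t ^ 2 / m) ≤ (1 - t ^ 2 / n) * (1 - t ^ 2 / m) := by
            nlinarith
        _ = exp (-t) * (1 - t ^ 2 / n) * (exp (- -t) * (1 - t ^ 2 / m)) := by
            rw [mul_mul_mul_comm, ← exp_add, add_neg_cancel, exp_zero, one_mul]
        _ ≤ (1 - t / n) ^ n * (1 - -t / m) ^ m :=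
            mul_le_mul hA hB (mul_nonneg (exp_pos _).le (by linarith)) hA₀
    · linarith [mul_nonneg hA₀ hB₀]
  rw [hflip, abs_sub_le_iff]
  constructor <;> linarith [show 0 ≤ t ^ 2 / n + t ^ 2 / m by positivity]

lemma eventually_le_and_mul_div_two_le {E C : ℝ} (hE : 0 < E) {a : ℕ → ℝ}
    (ha : ∀ k, |a k - k * E| ≤ C) : ∀ᶠ k : ℕ in atTop, C ≤ a k ∧ k * E / 2 ≤ a k := by
  filter_upwards [(tendsto_natCast_atTop_atTop.atTop_mul_const hE).eventually_ge_atTop (2 * C)]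
    with k hk
  have := (abs_le.1 (ha k)).1
  constructor <;> linarith

/-- If `E ∈ (0,1)`, `l(k)` stays within a bounded distance of `k·E`, and
`c(k) = l(k) − k·E`, then
`(1 − c(k)/l(k))^{l(k)} · (1 + c(k)/(k−l(k)))^{k−l(k)} = 1 + O(1/k)`. -/
theorem binomial_correction_factor (E : ℝ) (hE : E ∈ Set.Ioo (0 : ℝ) 1)
    (l : ℕ → ℕ) (hl : ∀ k, l k ≤ k)
    (hbd : ∃ C > 0, ∀ k : ℕ, |(l k : ℝ) - k * E| ≤ C)
    (c : ℕ → ℝ) (hc : ∀ k, c k = (l k : ℝ) - k * E) :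
    ∃ C' > 0, ∃ k₀ : ℕ, ∀ k ≥ k₀,
      |(1 - c k / (l k : ℝ)) ^ (l k) * (1 + c k / ((k : ℝ) - (l k : ℝ))) ^ (k - l k) - 1|
        ≤ C' / k := by
  obtain ⟨hE₀, hE₁⟩ := hE
  replace hE₁ : 0 < 1 - E := sub_pos.2 hE₁
  obtain ⟨C, hC₀, hC⟩ := hbd
  have hC' : ∀ k : ℕ, |((k - l k : ℕ) : ℝ) - k * (1 - E)| ≤ C := fun k => by
    rw [Nat.cast_sub (hl k), ← abs_neg]
    convert hC k using 2
    ring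
  obtain ⟨k₀, hk₀⟩ := eventually_atTop.1 ((eventually_le_and_mul_div_two_le hE₀ hC).and
    (eventually_le_and_mul_div_two_le hE₁ hC'))
  refine ⟨2 * C ^ 2 / E + 2 * C ^ 2 / (1 - E), by positivity, k₀, fun k hk => ?_⟩
  obtain ⟨⟨hCn, hn⟩, hCm, hm⟩ := hk₀ k hk
  have hck : |c k| ≤ C := hc k ▸ hC k
  have hk_pos : (0 : ℝ) < k := by linarith [(Nat.cast_le (α := ℝ)).2 (hl k)]
  have hc2 : c k ^ 2 ≤ C ^ 2 := by rw [← sq_abs]; gcongr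
  rw [← Nat.cast_sub (hl k)]
  calc _ ≤ c k ^ 2 / l k + c k ^ 2 / ((k - l k : ℕ) : ℝ) :=
        abs_one_sub_div_pow_mul_one_add_div_pow_sub_one_le (hck.trans hCn) (hck.trans hCm)
    _ ≤ C ^ 2 / (k * E / 2) + C ^ 2 / (k * (1 - E) / 2) := by gcongr
    _ = (2 * C ^ 2 / E + 2 * C ^ 2 / (1 - E)) / k := by field_simp
end

section
/- Let k be a natural number and let l, m be natural numbers with l ≤ k and m ≤ k. Then the integral over ℂ (with respect to Lebesgue measure) ∫_ℂ ζ^l · conj(ζ)^m / (1 + |ζ|²)^{k+2} dζ equals π·l!·(k−l)!/(k+1)! if l = m, and equals 0 if l ≠ m. -/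
/-!
In polar coordinates `ζ = r e^{iθ}` the integrand, times the Jacobian `r`, splits as
`r^{l+m+1} / (1 + r²)^{k+2} · e^{i(l-m)θ}`, so the integral is a radial integral times
`∫_{-π}^{π} e^{i(l-m)θ} dθ`, which is `2π` or `0`. For `l = m` the substitution
`t = r² / (1 + r²)` turns the radial integral into half the Beta integral
`∫₀¹ t^l (1-t)^{k-l} dt = l! (k-l)! / (k+1)!`.
-/

open MeasureTheory Set Real Nat Complex ComplexConjugate

theorem Complex.betaIntegral_natCast_add_one (a b : ℕ) :
    betaIntegral (a + 1) (b + 1) = a ! * b ! / (a + b + 1)! := by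
  have h := Gamma_mul_Gamma_eq_betaIntegral (s := a + 1) (t := b + 1)
    (by simp only [add_re, natCast_re, one_re]; positivity)
    (by simp only [add_re, natCast_re, one_re]; positivity)
  rw [show (a + 1 + (b + 1) : ℂ) = (a + b + 1 : ℕ) + 1 by push_cast; ring] at h
  simp only [Gamma_nat_eq_factorial] at h
  rw [h, mul_div_cancel_left₀ _ (by exact_mod_cast (a + b + 1).factorial_ne_zero)]

theorem integral_pow_mul_one_sub_pow (a b : ℕ) :
    ∫ x in (0 : ℝ)..1, x ^ a * (1 - x) ^ b = a ! * b ! / (a + b + 1)! := by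
  have h := betaIntegral_natCast_add_one a b
  simp only [betaIntegral, add_sub_cancel_right, cpow_natCast] at h
  rw [← ofReal_inj, ← intervalIntegral.integral_ofReal]
  push_cast
  exact h

theorem image_sq_div_one_add_sq_Ioi :
    (fun r : ℝ => r ^ 2 / (1 + r ^ 2)) '' Ioi 0 = Ioo 0 1 := by
  ext t
  constructor
  · rintro ⟨r, hr : 0 < r, rfl⟩
    exact ⟨by positivity, (div_lt_one (by positivity)).2 (by linarith)⟩
  · rintro ⟨ht0, ht1⟩
    have h1 : 0 < 1 - t := by linarith
    refine ⟨√(t / (1 - t)), Real.sqrt_pos.2 (div_pos ht0 h1), ?_⟩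
    simp only [Real.sq_sqrt (div_pos ht0 h1).le]
    field_simp
    ring

theorem injOn_sq_div_one_add_sq_Ioi : InjOn (fun r : ℝ => r ^ 2 / (1 + r ^ 2)) (Ioi 0) := by
  intro x (hx : 0 < x) y (hy : 0 < y) h
  rw [div_eq_div_iff (by positivity) (by positivity)] at h
  nlinarith

theorem hasDerivAt_sq_div_one_add_sq (r : ℝ) :
    HasDerivAt (fun r : ℝ => r ^ 2 / (1 + r ^ 2)) (2 * r / (1 + r ^ 2) ^ 2) r := by
  refine ((hasDerivAt_pow 2 r).div ((hasDerivAt_pow 2 r).const_add 1)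
    (by positivity)).congr_deriv ?_
  norm_num
  ring

theorem integral_Ioi_pow_div_one_add_sq_pow (a b : ℕ) :
    ∫ r in Ioi (0 : ℝ), r ^ (2 * a + 1) / (1 + r ^ 2) ^ (a + b + 2)
      = (a ! * b ! : ℝ) / (2 * (a + b + 1)!) := by
  have hsubst := integral_image_eq_integral_abs_deriv_smul measurableSet_Ioi
    (fun r _ => (hasDerivAt_sq_div_one_add_sq r).hasDerivWithinAt) injOn_sq_div_one_add_sq_Ioi
    (fun t => t ^ a * (1 - t) ^ b / 2)
  rw [image_sq_div_one_add_sq_Ioi, ← integral_Ioc_eq_integral_Ioo,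
    ← intervalIntegral.integral_of_le zero_le_one, intervalIntegral.integral_div,
    integral_pow_mul_one_sub_pow, div_div, mul_comm _ (2 : ℝ)] at hsubst
  rw [hsubst]
  refine setIntegral_congr_fun measurableSet_Ioi fun r (hr : 0 < r) => ?_
  have hsub : 1 - r ^ 2 / (1 + r ^ 2) = 1 / (1 + r ^ 2) := by field_simp; ring
  simp only [smul_eq_mul, hsub, abs_of_pos (by positivity : 0 < 2 * r / (1 + r ^ 2) ^ 2),
    div_pow, one_pow]
  field_simp
  ring

theorem integral_Ioo_exp_int_mul_I (n : ℤ) :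
    ∫ θ in Ioo (-π) π, exp (n * θ * I) = if n = 0 then 2 * π else 0 := by
  have hπ : -π ≤ π := by linarith [Real.pi_pos]
  split_ifs with hn
  · simp only [hn, Int.cast_zero, zero_mul, Complex.exp_zero, setIntegral_const,
      Real.volume_real_Ioo_of_le hπ, real_smul, mul_one]
    push_cast
    ring
  · have hc : (n * I : ℂ) ≠ 0 := mul_ne_zero (by exact_mod_cast hn) I_ne_zero
    simp_rw [mul_right_comm _ _ I]
    rw [← integral_Ioc_eq_integral_Ioo, ← intervalIntegral.integral_of_le hπ,
      integral_exp_mul_complex hc]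
    have hper : (n * I * π : ℂ) = n * I * (-π : ℝ) + n * (2 * π * I) := by push_cast; ring
    rw [hper, Complex.exp_add, exp_int_mul_two_pi_mul_I, mul_one, sub_self, zero_div, ofReal_zero]

theorem Complex.polarCoord_symm_eq_mul_exp (p : ℝ × ℝ) :
    Complex.polarCoord.symm p = p.1 * exp (p.2 * I) := by
  rw [Complex.polarCoord_symm_apply, ofReal_cos, ofReal_sin, ← exp_mul_I]

theorem integral_pow_mul_conj_pow_mul_radial (l m : ℕ) (g : ℝ → ℝ) :
    ∫ ζ : ℂ, ζ ^ l * conj ζ ^ m * g ‖ζ‖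
      = (∫ r in Ioi 0, r ^ (l + m + 1) * g r : ℝ) *
          ∫ θ in Ioo (-π) π, exp (((l : ℤ) - m : ℤ) * θ * I) := by
  rw [← Complex.integral_comp_polarCoord_symm, polarCoord_target, Measure.volume_eq_prod,
    ← integral_complex_ofReal, ← setIntegral_prod_mul]
  refine setIntegral_congr_fun (measurableSet_Ioi.prod measurableSet_Ioo) ?_
  rintro ⟨r, θ⟩ ⟨hr : 0 < r, -⟩
  simp only [polarCoord_symm_eq_mul_exp, real_smul, map_mul, conj_ofReal, ← exp_conj, conj_I]
  have hnorm : ‖(r : ℂ) * exp (θ * I)‖ = r := by simp [hr.le]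
  have hexp : exp (θ * I) ^ l * exp (θ * -I) ^ m = exp (((l : ℤ) - m : ℤ) * θ * I) := by
    rw [← Complex.exp_nat_mul, ← Complex.exp_nat_mul, ← Complex.exp_add]
    push_cast
    ring_nf
  rw [hnorm, ← hexp]
  push_cast
  ring

theorem integral_monomials_fubini_study_general (k l m : ℕ) (hl : l ≤ k) :
    ∫ ζ : ℂ,
      ζ ^ l * (starRingEnd ℂ ζ) ^ m / ((1 + Complex.normSq ζ : ℝ) : ℂ) ^ (k + 2)
    = if l = m then
        (Real.pi : ℂ) * (Nat.factorial l : ℂ) * (Nat.factorial (k - l) : ℂ) /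
          (Nat.factorial (k + 1) : ℂ)
      else 0 := by
  set g : ℝ → ℝ := fun r => ((1 + r ^ 2) ^ (k + 2))⁻¹
  have hintegrand : (fun ζ : ℂ => ζ ^ l * conj ζ ^ m / ((1 + normSq ζ : ℝ) : ℂ) ^ (k + 2))
      = fun ζ : ℂ => ζ ^ l * conj ζ ^ m * g ‖ζ‖ := by
    ext ζ
    simp only [g, normSq_eq_norm_sq]
    push_cast
    rfl
  rw [hintegrand, integral_pow_mul_conj_pow_mul_radial l m g, integral_Ioo_exp_int_mul_I]
  simp only [sub_eq_zero, Nat.cast_inj]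
  split_ifs with hlm
  · subst hlm
    obtain ⟨b, rfl⟩ := Nat.exists_eq_add_of_le hl
    simp_rw [g, ← div_eq_mul_inv, ← two_mul, integral_Ioi_pow_div_one_add_sq_pow,
      Nat.add_sub_cancel_left]
    push_cast
    field_simp
  · rw [ofReal_zero, mul_zero]

/-- Orthogonality and normalization of the monomials on `ℂ`: for `l, m ≤ k`,
`∫_ℂ ζ^l · conj(ζ)^m / (1+|ζ|²)^{k+2} dζ = π·l!·(k−l)!/(k+1)!` if `l = m`, else `0`. -/
theorem integral_monomials_fubini_study (k l m : ℕ) (hl : l ≤ k) (hm : m ≤ k) :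
    ∫ ζ : ℂ,
      ζ ^ l * (starRingEnd ℂ ζ) ^ m / ((1 + Complex.normSq ζ : ℝ) : ℂ) ^ (k + 2)
    = if l = m then
        (Real.pi : ℂ) * (Nat.factorial l : ℂ) * (Nat.factorial (k - l) : ℂ) /
          (Nat.factorial (k + 1) : ℂ)
      else 0 :=
  integral_monomials_fubini_study_general k l m hl
end
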